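/- The positive unit ball B^+ of the binary tree space X_T is not a slicely countably determined set: for every countable collection {S_n} of slices of B^+ there exists a choice x_n ∈ S_n such that 0 is not in the closed convex hull of {x_n : n ∈ ℕ}. In particular, X_T is a separable Banach space with a 1-unconditional basis which is not an SCD space. -/

import Mathlib

open Metric Filter Topology

/-- Nodes of the infinite binary tree: finite sequences over `{0,1}`. -/
abbrev TreeNode := List Bool

/-- A finite set of nodes is a chain if its elements are pairwise comparable for the
initial-segment (prefix) order. -/
def IsFinChain (A : Finset TreeNode) : Prop := ∀ s ∈ A, ∀ t ∈ A, s <+: t ∨ t <+: s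

/-- A set of nodes is a chain if its elements are pairwise comparable. -/
def IsSetChain (A : Set TreeNode) : Prop := ∀ s ∈ A, ∀ t ∈ A, s <+: t ∨ t <+: s

/-- A branch is a maximal chain of the binary tree. -/
def IsBranch (β : Set TreeNode) : Prop :=
  IsSetChain β ∧ ∀ γ : Set TreeNode, IsSetChain γ → β ⊆ γ → γ = β

/-- A set of nodes is an antichain if its elements are pairwise incomparable. -/
def IsTreeAntichain (A : Set TreeNode) : Prop :=
  ∀ s ∈ A, ∀ t ∈ A, s ≠ t → ¬ s <+: t ∧ ¬ t <+: s

/-- The binary tree norm of a finitely supported function on the tree: the supremum over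
chains `A` of `∑_{t ∈ A} |c t|`. -/
noncomputable def treeNorm (c : TreeNode →₀ ℝ) : ℝ :=
  sSup {r | ∃ A : Finset TreeNode, IsFinChain A ∧ r = ∑ t ∈ A, |c t|}

/-- The slice of a set `A` determined by a functional `f` and `δ > 0`. -/
def ballSlice {X : Type*} [NormedAddCommGroup X] [NormedSpace ℝ X]
    (A : Set X) (f : X →L[ℝ] ℝ) (δ : ℝ) : Set X :=
  {y ∈ A | sSup (f '' A) - δ < f y}

namespace BTaux

lemma prefix_comparable {s t v : TreeNode} (hs : s <+: v) (ht : t <+: v) :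
    s <+: t ∨ t <+: s := by
  rcases le_total s.length t.length with h | h
  · left
    rw [List.prefix_iff_eq_take.mp hs, List.prefix_iff_eq_take.mp ht]
    exact List.take_prefix_take_left h
  · right
    rw [List.prefix_iff_eq_take.mp hs, List.prefix_iff_eq_take.mp ht]
    exact List.take_prefix_take_left h

lemma isFinChain_inits (v : TreeNode) : IsFinChain v.inits.toFinset := by
  intro s hs t ht
  rw [List.mem_toFinset, List.mem_inits] at hs ht
  exact prefix_comparable hs ht

def anode (w : TreeNode) (i : ℕ) : TreeNode := w ++ List.replicate i true ++ [false]

lemma anode_length (w : TreeNode) (i : ℕ) : (anode w i).length = w.length + i + 1 := by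
  simp [anode]; omega

lemma anode_prefix (w : TreeNode) (i : ℕ) : w <+: anode w i :=
  ⟨List.replicate i true ++ [false], by simp [anode]⟩

lemma anode_not_prefix_lt (w : TreeNode) {i j : ℕ} (hij : i < j) :
    ¬ anode w i <+: anode w j := by
  rintro ⟨r, hr⟩
  simp only [anode, List.append_assoc] at hr
  have h1 := List.append_cancel_left hr
  have hj : j = i + (j - i) := by omega
  rw [hj, List.replicate_add, List.append_assoc] at h1
  have h2 := List.append_cancel_left h1
  obtain ⟨k, hk⟩ : ∃ k, j - i = k + 1 := ⟨j - i - 1, by omega⟩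
  rw [hk, List.replicate_succ] at h2
  simp at h2

lemma anode_incomp (w : TreeNode) {i j : ℕ} (hij : i ≠ j) :
    ¬ anode w i <+: anode w j := by
  rcases lt_or_gt_of_ne hij with h | h
  · exact anode_not_prefix_lt w h
  · intro hp
    have := hp.length_le
    rw [anode_length, anode_length] at this
    omega

lemma treeNorm_set_nonempty (c : TreeNode →₀ ℝ) :
    Set.Nonempty {r | ∃ A : Finset TreeNode, IsFinChain A ∧ r = ∑ t ∈ A, |c t|} :=
  ⟨0, ∅, fun s hs => absurd hs (Finset.notMem_empty s), by simp⟩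

lemma treeNorm_bddAbove (c : TreeNode →₀ ℝ) :
    BddAbove {r | ∃ A : Finset TreeNode, IsFinChain A ∧ r = ∑ t ∈ A, |c t|} := by
  refine ⟨∑ t ∈ c.support, |c t|, ?_⟩
  rintro r ⟨A, hA, rfl⟩
  calc ∑ t ∈ A, |c t| = ∑ t ∈ A ∩ c.support, |c t| := by
        symm
        apply Finset.sum_subset Finset.inter_subset_left
        intro t htA htn
        have : t ∉ c.support := fun h => htn (Finset.mem_inter.mpr ⟨htA, h⟩)
        rw [Finsupp.notMem_support_iff.mp this, abs_zero]
    _ ≤ ∑ t ∈ c.support, |c t| :=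
        Finset.sum_le_sum_of_subset_of_nonneg Finset.inter_subset_right
          (fun t _ _ => abs_nonneg _)

lemma sum_abs_le_treeNorm {c : TreeNode →₀ ℝ} {A : Finset TreeNode} (hA : IsFinChain A) :
    ∑ t ∈ A, |c t| ≤ treeNorm c :=
  le_csSup (treeNorm_bddAbove c) ⟨A, hA, rfl⟩

lemma treeNorm_le {c : TreeNode →₀ ℝ} {r : ℝ}
    (h : ∀ A : Finset TreeNode, IsFinChain A → ∑ t ∈ A, |c t| ≤ r) : treeNorm c ≤ r :=
  csSup_le (treeNorm_set_nonempty c) (by rintro s ⟨A, hA, rfl⟩; exact h A hA)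

variable {X : Type*} [NormedAddCommGroup X] [NormedSpace ℝ X]

noncomputable def JJ (e : TreeNode → X) : (TreeNode →₀ ℝ) →ₗ[ℝ] X :=
  Finsupp.linearCombination ℝ e

lemma JJ_apply (e : TreeNode → X) (c : TreeNode →₀ ℝ) :
    JJ e c = c.sum fun t a => a • e t := rfl

lemma JJ_single (e : TreeNode → X) (t : TreeNode) (a : ℝ) :
    JJ e (Finsupp.single t a) = a • e t := by
  unfold JJ
  rw [Finsupp.linearCombination_single]

lemma coordJ (e : TreeNode → X) (coord : TreeNode → X →L[ℝ] ℝ)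
    (hcoord : ∀ s t, coord s (e t) = if s = t then 1 else 0) (s : TreeNode)
    (c : TreeNode →₀ ℝ) : coord s (JJ e c) = c s := by
  classical
  rw [JJ_apply, map_finsuppSum, Finsupp.sum]
  have h1 : ∀ t ∈ c.support, coord s (c t • e t) = if s = t then c t else 0 := by
    intro t _
    rw [(coord s).map_smul, hcoord]
    simp only [smul_eq_mul, mul_ite, mul_one, mul_zero]
  rw [Finset.sum_congr rfl h1, Finset.sum_ite_eq]
  by_cases hs : s ∈ c.support
  · simp [hs]
  · simp [hs, Finsupp.notMem_support_iff.mp hs]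

lemma sum_abs_coord_le {e : TreeNode → X} {coord : TreeNode → X →L[ℝ] ℝ}
    (hnorm : ∀ c : TreeNode →₀ ℝ, ‖JJ e c‖ = treeNorm c)
    (hdense : DenseRange (fun c : TreeNode →₀ ℝ => JJ e c))
    (hcoord : ∀ s t, coord s (e t) = if s = t then 1 else 0)
    {C : Finset TreeNode} (hC : IsFinChain C) (y : X) :
    ∑ t ∈ C, |coord t y| ≤ ‖y‖ := by
  have hcl : IsClosed {y : X | ∑ t ∈ C, |coord t y| ≤ ‖y‖} := by
    apply isClosed_le
    · exact continuous_finset_sum _ fun t _ => (coord t).continuous.abs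
    · exact continuous_norm
  have hsub : Set.range (fun c : TreeNode →₀ ℝ => JJ e c) ⊆
      {y : X | ∑ t ∈ C, |coord t y| ≤ ‖y‖} := by
    rintro - ⟨c, rfl⟩
    simp only [Set.mem_setOf_eq]
    rw [hnorm]
    calc ∑ t ∈ C, |coord t (JJ e c)| = ∑ t ∈ C, |c t| :=
          Finset.sum_congr rfl fun t _ => by rw [coordJ e coord hcoord]
      _ ≤ treeNorm c := sum_abs_le_treeNorm hC
  have hy := closure_mono hsub (hdense y)
  rwa [hcl.closure_eq] at hy

end BTaux


set_option maxHeartbeats 4000000 in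
open BTaux in
/-- **The positive unit ball of the binary tree space is not an SCD set:** for every countable
collection of slices `S_n` of `B⁺ = {x ∈ B_{X_T} : x(t) ≥ 0 ∀ t}` there is a choice
`x_n ∈ S_n` such that `0` does not belong to the closed convex hull of `{x_n : n ∈ ℕ}`;
in particular `B⁺` is not contained in that closed convex hull, so the binary tree space
(a Banach space with a 1-unconditional basis) is not an SCD space. -/
theorem binary_tree_positive_ball_not_SCD {X : Type*} [NormedAddCommGroup X]
    [NormedSpace ℝ X] [CompleteSpace X] (e : TreeNode → X) (coord : TreeNode → X →L[ℝ] ℝ)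
    (hnorm : ∀ c : TreeNode →₀ ℝ, ‖c.sum fun t a => a • e t‖ = treeNorm c)
    (hdense : DenseRange fun c : TreeNode →₀ ℝ => c.sum fun t a => a • e t)
    (hcoord : ∀ s t, coord s (e t) = if s = t then 1 else 0)
    (Bplus : Set X) (hBplus : Bplus = {x ∈ closedBall (0 : X) 1 | ∀ t, 0 ≤ coord t x})
    (f : ℕ → X →L[ℝ] ℝ) (δ : ℕ → ℝ) (hδ : ∀ n, 0 < δ n) :
    ∃ x : ℕ → X, (∀ n, x n ∈ ballSlice Bplus (f n) (δ n)) ∧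
      (0 : X) ∉ closure (convexHull ℝ (Set.range x)) ∧
      ¬ Bplus ⊆ closure (convexHull ℝ (Set.range x)) := by
  classical
  have hnorm' : ∀ c : TreeNode →₀ ℝ, ‖JJ e c‖ = treeNorm c := fun c => by
    rw [JJ_apply]; exact hnorm c
  have hdense' : DenseRange (fun c : TreeNode →₀ ℝ => JJ e c) := by
    simpa only [JJ_apply] using hdense
  set δ' : ℕ → ℝ := fun n => min (δ n) 1 with hδ'def
  have hδ'pos : ∀ n, 0 < δ' n := fun n => lt_min (hδ n) one_pos
  have hδ'le : ∀ n, δ' n ≤ δ n := fun n => min_le_left _ _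
  have hδ'1 : ∀ n, δ' n ≤ 1 := fun n => min_le_right _ _
  set M : ℕ → ℝ := fun n => sSup ((f n) '' Bplus) with hMdef
  have hB1 : ∀ y ∈ Bplus, ‖y‖ ≤ 1 := by
    rw [hBplus]; rintro y ⟨hy1, -⟩; exact mem_closedBall_zero_iff.mp hy1
  have hBpos : ∀ y ∈ Bplus, ∀ t, 0 ≤ coord t y := by
    rw [hBplus]; rintro y ⟨-, h⟩; exact h
  have h0B : (0 : X) ∈ Bplus := by
    rw [hBplus]; exact ⟨mem_closedBall_self zero_le_one, fun t => by simp⟩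
  have memB : ∀ c : TreeNode →₀ ℝ, (∀ t, 0 ≤ c t) → treeNorm c ≤ 1 → JJ e c ∈ Bplus := by
    intro c hc hn
    rw [hBplus]
    refine ⟨?_, ?_⟩
    · rw [mem_closedBall_zero_iff, hnorm' c]; exact hn
    · intro t; rw [coordJ e coord hcoord]; exact hc t
  have hMne : ∀ n, ((f n) '' Bplus).Nonempty := fun n => ⟨f n 0, 0, h0B, rfl⟩
  have hMbdd : ∀ n, BddAbove ((f n) '' Bplus) := by
    intro n
    refine ⟨‖f n‖, ?_⟩
    rintro - ⟨y, hy, rfl⟩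
    calc f n y ≤ |f n y| := le_abs_self _
      _ ≤ ‖f n‖ * ‖y‖ := (f n).le_opNorm y
      _ ≤ ‖f n‖ * 1 := mul_le_mul_of_nonneg_left (hB1 y hy) (norm_nonneg _)
      _ = ‖f n‖ := mul_one _
  have hM0 : ∀ n, 0 ≤ M n := fun n => by
    have := le_csSup (hMbdd n) ⟨0, h0B, rfl⟩
    simpa using this
  -- approximation lemma
  have approx : ∀ n, ∃ c : TreeNode →₀ ℝ, (∀ t, 0 ≤ c t) ∧ treeNorm c ≤ 1 ∧
      M n - δ' n / 2 < f n (JJ e c) := by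
    intro n
    set K := ‖f n‖ + 1 with hK
    have hKpos : 0 < K := by positivity
    have hfK : ‖f n‖ ≤ K := by simp [hK]
    have hδn := hδ'pos n
    obtain ⟨z, hzmem, hzy⟩ := exists_lt_of_lt_csSup (hMne n)
      (show M n - δ' n / 8 < M n by linarith)
    obtain ⟨y, hyB, rfl⟩ := hzmem
    set η := δ' n / (16 * K) with hη
    have hηpos : 0 < η := by positivity
    have hηK : 16 * η * K = δ' n := by rw [hη]; field_simp
    have hη1 : η ≤ 1 / 16 := by
      rw [hη, div_le_div_iff₀ (by positivity) (by norm_num)]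
      nlinarith [hδ'1 n, hKpos, hfK, norm_nonneg (f n)]
    clear_value K
    obtain ⟨c, hc⟩ := hdense'.exists_dist_lt y hηpos
    have hcy : ‖JJ e c - y‖ < η := by rw [← dist_eq_norm, dist_comm]; exact hc
    set cp : TreeNode →₀ ℝ := c.mapRange (fun a => max a 0) (by simp) with hcp
    have hcpa : ∀ t, cp t = max (c t) 0 := fun t => Finsupp.mapRange_apply
    clear_value cp
    have hdiff : treeNorm (cp - c) ≤ ‖JJ e c - y‖ := by
      apply treeNorm_le
      intro A hA
      have hle : ∀ t ∈ A, |(cp - c) t| ≤ |coord t (JJ e c - y)| := by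
        intro t _
        have h0 : 0 ≤ coord t y := hBpos y hyB t
        rw [Finsupp.coe_sub, Pi.sub_apply, hcpa, map_sub, coordJ e coord hcoord]
        rcases le_or_gt 0 (c t) with h | h
        · rw [max_eq_left h, sub_self, abs_zero]; exact abs_nonneg _
        · rw [max_eq_right h.le, zero_sub, abs_neg, abs_of_neg h]
          rw [abs_of_nonpos (by linarith)]
          linarith
      calc ∑ t ∈ A, |(cp - c) t| ≤ ∑ t ∈ A, |coord t (JJ e c - y)| := Finset.sum_le_sum hle
        _ ≤ ‖JJ e c - y‖ := sum_abs_coord_le hnorm' hdense' hcoord hA _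
    have h1 : ‖JJ e cp - JJ e c‖ < η := by
      rw [← map_sub, hnorm']
      exact lt_of_le_of_lt hdiff hcy
    have h2 : ‖JJ e cp - y‖ ≤ 2 * η := by
      have he : JJ e cp - y = (JJ e cp - JJ e c) + (JJ e c - y) := by abel
      rw [he]
      calc ‖(JJ e cp - JJ e c) + (JJ e c - y)‖ ≤ ‖JJ e cp - JJ e c‖ + ‖JJ e c - y‖ :=
            norm_add_le _ _
        _ ≤ 2 * η := by linarith
    have hcpn : ‖JJ e cp‖ ≤ 1 + 2 * η := by
      calc ‖JJ e cp‖ = ‖(JJ e cp - y) + y‖ := by rw [sub_add_cancel]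
        _ ≤ ‖JJ e cp - y‖ + ‖y‖ := norm_add_le _ _
        _ ≤ 1 + 2 * η := by linarith [hB1 y hyB]
    set a := (1 + 2 * η)⁻¹ with ha
    have hapos : 0 < a := by positivity
    have haeq : a * (1 + 2 * η) = 1 := inv_mul_cancel₀ (by positivity)
    have ha1 : a ≤ 1 := by nlinarith
    have h1a : 1 - a ≤ 2 * η := by nlinarith
    clear_value a
    set xv := f n (JJ e cp) with hxv
    clear_value xv
    have hxvy : |xv - f n y| ≤ δ' n / 8 := by
      rw [hxv, ← Real.norm_eq_abs, ← map_sub]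
      calc ‖f n (JJ e cp - y)‖ ≤ ‖f n‖ * ‖JJ e cp - y‖ := (f n).le_opNorm _
        _ ≤ K * (2 * η) := mul_le_mul hfK h2 (norm_nonneg _) hKpos.le
        _ ≤ δ' n / 8 := by
            have hr : K * (2 * η) = (16 * η * K) / 8 := by ring
            rw [hr, hηK]
    have hxvabs : |xv| ≤ 2 * K := by
      rw [hxv, ← Real.norm_eq_abs]
      calc ‖f n (JJ e cp)‖ ≤ ‖f n‖ * ‖JJ e cp‖ := (f n).le_opNorm _
        _ ≤ K * (1 + 2 * η) := mul_le_mul hfK hcpn (norm_nonneg _) hKpos.le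
        _ ≤ 2 * K := by nlinarith
    refine ⟨a • cp, ?_, ?_, ?_⟩
    · intro t
      rw [Finsupp.smul_apply, hcpa, smul_eq_mul]
      exact mul_nonneg hapos.le (le_max_right _ _)
    · rw [← hnorm', map_smul, norm_smul, Real.norm_eq_abs, abs_of_pos hapos]
      calc a * ‖JJ e cp‖ ≤ a * (1 + 2 * η) := mul_le_mul_of_nonneg_left hcpn hapos.le
        _ = 1 := haeq
    · have hfa : f n (JJ e (a • cp)) = a * xv := by
        rw [map_smul, map_smul, smul_eq_mul, hxv]
      rw [hfa]
      have hup : (1 - a) * xv ≤ δ' n / 4 := by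
        calc (1 - a) * xv ≤ (1 - a) * |xv| :=
              mul_le_mul_of_nonneg_left (le_abs_self _) (by linarith)
          _ ≤ (2 * η) * (2 * K) := mul_le_mul h1a hxvabs (abs_nonneg _) (by linarith)
          _ ≤ δ' n / 4 := by
              have hr : (2 * η) * (2 * K) = (16 * η * K) / 4 := by ring
              rw [hr, hηK]
      have hxl : f n y - δ' n / 8 ≤ xv := by
        have := abs_le.mp hxvy
        linarith [this.1]
      have hring : a * xv = xv - (1 - a) * xv := by ring
      linarith
  -- Daugavet-type step
  have step : ∀ (n : ℕ) (w : TreeNode), ∃ (v : TreeNode) (c : TreeNode →₀ ℝ),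
      w <+: v ∧ (∀ t, 0 ≤ c t) ∧ treeNorm c ≤ 1 ∧ M n - δ n < f n (JJ e c) ∧
      ∑ t ∈ v.inits.toFinset, c t = 1 := by
    intro n w
    obtain ⟨c₀, hc₀pos, hc₀n, hc₀f⟩ := approx n
    set L₀ := (c₀.support.sup List.length) + 1 with hL₀
    have hvanish : ∀ t : TreeNode, L₀ ≤ t.length → c₀ t = 0 := by
      intro t ht
      by_contra h
      have h1 : t ∈ c₀.support := Finsupp.mem_support_iff.mpr h
      have h2 := Finset.le_sup (f := List.length) h1
      omega
    obtain ⟨N, hN⟩ := exists_nat_gt (‖f n‖ / (δ' n / 2))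
    have hsel : ∃ i, i < N ∧ -(δ' n / 2) < f n (e (anode w (L₀ + i))) := by
      by_contra hcon
      push_neg at hcon
      set V : Finset TreeNode := (Finset.range N).image (fun i => anode w (L₀ + i)) with hV
      have hinjV : ∀ i ∈ Finset.range N, ∀ j ∈ Finset.range N,
          anode w (L₀ + i) = anode w (L₀ + j) → i = j := by
        intro i _ j _ h
        have := congrArg List.length h
        rw [anode_length, anode_length] at this
        omega
      set cV : TreeNode →₀ ℝ := ∑ t ∈ V, Finsupp.single t (1 : ℝ) with hcV
      have hcVapp : ∀ t, cV t = if t ∈ V then 1 else 0 := by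
        intro t
        rw [hcV, Finset.sum_apply']
        rw [Finset.sum_congr rfl (fun s _ => Finsupp.single_apply)]
        exact Finset.sum_ite_eq' V t (fun _ => (1 : ℝ))
      have hcVnorm : treeNorm cV ≤ 1 := by
        apply treeNorm_le
        intro A hA
        have h1 : ∑ t ∈ A, |cV t| = ∑ t ∈ A, (if t ∈ V then (1 : ℝ) else 0) := by
          refine Finset.sum_congr rfl fun t _ => ?_
          rw [hcVapp]
          split <;> simp
        rw [h1, Finset.sum_boole]
        rw [Nat.cast_le_one]
        apply Finset.card_le_one.mpr
        intro a ha b hb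
        rw [Finset.mem_filter] at ha hb
        obtain ⟨i, -, rfl⟩ := Finset.mem_image.mp ha.2
        obtain ⟨j, -, rfl⟩ := Finset.mem_image.mp hb.2
        by_cases hij : i = j
        · rw [hij]
        · rcases hA _ ha.1 _ hb.1 with hp | hp
          · exact absurd hp (anode_incomp w (by omega))
          · exact absurd hp (anode_incomp w (by omega))
      have hJV : JJ e cV = ∑ t ∈ V, e t := by
        rw [hcV, map_sum]
        exact Finset.sum_congr rfl fun t _ => by rw [JJ_single, one_smul]
      have hfV : f n (JJ e cV) ≤ -(N * (δ' n / 2)) := by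
        rw [hJV, map_sum]
        calc ∑ t ∈ V, f n (e t)
            = ∑ i ∈ Finset.range N, f n (e (anode w (L₀ + i))) := by
              rw [hV, Finset.sum_image hinjV]
          _ ≤ ∑ _i ∈ Finset.range N, -(δ' n / 2) :=
              Finset.sum_le_sum fun i hi => hcon i (Finset.mem_range.mp hi)
          _ = -(N * (δ' n / 2)) := by
              rw [Finset.sum_const, Finset.card_range, nsmul_eq_mul]
              ring
      have habs : -‖f n‖ ≤ f n (JJ e cV) := by
        have h1 : ‖f n (JJ e cV)‖ ≤ ‖f n‖ * ‖JJ e cV‖ := (f n).le_opNorm _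
        have h2 : ‖JJ e cV‖ ≤ 1 := by rw [hnorm']; exact hcVnorm
        have h3 : ‖f n (JJ e cV)‖ ≤ ‖f n‖ := by
          calc ‖f n (JJ e cV)‖ ≤ ‖f n‖ * ‖JJ e cV‖ := h1
            _ ≤ ‖f n‖ * 1 := mul_le_mul_of_nonneg_left h2 (norm_nonneg _)
            _ = ‖f n‖ := mul_one _
        have h4 := neg_abs_le (f n (JJ e cV))
        rw [Real.norm_eq_abs] at h3
        linarith
      have hNd : ‖f n‖ < N * (δ' n / 2) := by
        rw [div_lt_iff₀ (by linarith [hδ'pos n] : (0:ℝ) < δ' n / 2)] at hN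
        linarith
      linarith
    obtain ⟨i, hiN, hfe⟩ := hsel
    set v := anode w (L₀ + i) with hv
    have hwv : w <+: v := anode_prefix w _
    have hvlen : L₀ ≤ v.length := by rw [hv, anode_length]; omega
    set I : Finset TreeNode := v.inits.toFinset with hI
    have hIchain : IsFinChain I := isFinChain_inits v
    have hmemI : ∀ t, t ∈ I ↔ t <+: v := by
      intro t; rw [hI, List.mem_toFinset, List.mem_inits]
    clear_value v
    set μ := ∑ t ∈ I, c₀ t with hμ
    have hμ0 : 0 ≤ μ := Finset.sum_nonneg fun t _ => hc₀pos t
    have hμ1 : μ ≤ 1 := by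
      calc μ = ∑ t ∈ I, |c₀ t| :=
            Finset.sum_congr rfl fun t _ => (abs_of_nonneg (hc₀pos t)).symm
        _ ≤ treeNorm c₀ := sum_abs_le_treeNorm hIchain
        _ ≤ 1 := hc₀n
    clear_value μ
    set c := c₀ + Finsupp.single v (1 - μ) with hc
    have hcapp : ∀ t, c t = c₀ t + (if v = t then 1 - μ else 0) := fun t => by
      rw [hc, Finsupp.add_apply, Finsupp.single_apply]
    clear_value c
    have hcpos : ∀ t, 0 ≤ c t := by
      intro t
      rw [hcapp]
      apply add_nonneg (hc₀pos t)
      split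
      · linarith
      · exact le_rfl
    have hkey : ∀ A : Finset TreeNode, IsFinChain A → v ∈ A → ∑ t ∈ A, c₀ t ≤ μ := by
      intro A hA hvA
      calc ∑ t ∈ A, c₀ t = ∑ t ∈ A ∩ I, c₀ t := by
            symm
            apply Finset.sum_subset Finset.inter_subset_left
            intro t htA htn
            have htI : t ∉ I := fun h => htn (Finset.mem_inter.mpr ⟨htA, h⟩)
            rcases hA t htA v hvA with hp | hp
            · exact absurd ((hmemI t).mpr hp) htI
            · have hlen : v.length < t.length := by
                rcases eq_or_lt_of_le hp.length_le with he | hlt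
                · exact absurd ((hmemI t).mpr (hp.eq_of_length he ▸ List.prefix_refl t)) htI
                · exact hlt
              exact hvanish t (by omega)
        _ ≤ ∑ t ∈ I, c₀ t :=
            Finset.sum_le_sum_of_subset_of_nonneg Finset.inter_subset_right
              (fun t _ _ => hc₀pos t)
        _ = μ := hμ.symm
    have hcnorm : treeNorm c ≤ 1 := by
      apply treeNorm_le
      intro A hA
      have h1 : ∑ t ∈ A, |c t| = ∑ t ∈ A, c₀ t + ∑ t ∈ A, (if v = t then 1 - μ else 0) := by
        rw [← Finset.sum_add_distrib]
        exact Finset.sum_congr rfl fun t _ => by rw [abs_of_nonneg (hcpos t), hcapp]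
      rw [h1, Finset.sum_ite_eq]
      by_cases hvA : v ∈ A
      · rw [if_pos hvA]
        linarith [hkey A hA hvA]
      · rw [if_neg hvA, add_zero]
        calc ∑ t ∈ A, c₀ t = ∑ t ∈ A, |c₀ t| :=
              Finset.sum_congr rfl fun t _ => (abs_of_nonneg (hc₀pos t)).symm
          _ ≤ treeNorm c₀ := sum_abs_le_treeNorm hA
          _ ≤ 1 := hc₀n
    have hvI : v ∈ I := (hmemI v).mpr (List.prefix_refl v)
    have hmass : ∑ t ∈ I, c t = 1 := by
      rw [Finset.sum_congr rfl (fun t (_ : t ∈ I) => hcapp t), Finset.sum_add_distrib,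
        Finset.sum_ite_eq, if_pos hvI, ← hμ]
      ring
    have hslice : M n - δ n < f n (JJ e c) := by
      have hJc : JJ e c = JJ e c₀ + (1 - μ) • e v := by
        rw [hc, map_add, JJ_single]
      have hfc : f n (JJ e c) = f n (JJ e c₀) + (1 - μ) * f n (e v) := by
        rw [hJc, (f n).map_add, (f n).map_smul, smul_eq_mul]
      rw [hfc]
      have h1 : -(δ' n / 2) ≤ (1 - μ) * f n (e v) := by
        rcases le_or_gt 0 (f n (e v)) with h | h
        · have : 0 ≤ (1 - μ) * f n (e v) := mul_nonneg (by linarith) h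
          linarith [hδ'pos n]
        · have h2 : (1 - μ) * f n (e v) ≥ 1 * f n (e v) := by nlinarith
          rw [one_mul] at h2
          linarith
      have h2 := hδ'le n
      linarith
    exact ⟨v, c, hwv, hcpos, hcnorm, hslice, hmass⟩
  -- recursive construction of the branch and the slice points
  choose vf cf hvf hcfpos hcfnorm hcfslice hcfmass using step
  let wseq : ℕ → TreeNode := fun n => Nat.rec (vf 0 []) (fun k ih => vf (k + 1) ih) n
  let cseq : ℕ → (TreeNode →₀ ℝ) := fun n =>
    match n with
    | 0 => cf 0 []
    | (k + 1) => cf (k + 1) (wseq k)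
  have hwS : ∀ k, wseq (k + 1) = vf (k + 1) (wseq k) := fun k => rfl
  have hpos : ∀ n t, 0 ≤ cseq n t := by
    intro n
    cases n with
    | zero => exact hcfpos 0 []
    | succ k => exact hcfpos (k + 1) (wseq k)
  have hnseq : ∀ n, treeNorm (cseq n) ≤ 1 := by
    intro n
    cases n with
    | zero => exact hcfnorm 0 []
    | succ k => exact hcfnorm (k + 1) (wseq k)
  have hsliceseq : ∀ n, M n - δ n < f n (JJ e (cseq n)) := by
    intro n
    cases n with
    | zero => exact hcfslice 0 []
    | succ k => exact hcfslice (k + 1) (wseq k)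
  have hmassseq : ∀ n, ∑ t ∈ (wseq n).inits.toFinset, cseq n t = 1 := by
    intro n
    cases n with
    | zero => exact hcfmass 0 []
    | succ k => exact hcfmass (k + 1) (wseq k)
  have hmono : ∀ m n, m ≤ n → wseq m <+: wseq n := by
    intro m n h
    induction n with
    | zero =>
      have : m = 0 := Nat.le_zero.mp h
      rw [this]
    | succ k ih =>
      rcases eq_or_lt_of_le h with h' | h'
      · rw [h']
      · have h2 : wseq k <+: wseq (k + 1) := by
          rw [hwS k]; exact hvf (k + 1) (wseq k)
        exact (ih (Nat.lt_succ_iff.mp h')).trans h2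
  set x : ℕ → X := fun n => JJ e (cseq n) with hx
  have hxmem : ∀ n, x n ∈ ballSlice Bplus (f n) (δ n) := by
    intro n
    exact ⟨memB (cseq n) (hpos n) (hnseq n), hsliceseq n⟩
  have hbig : ∀ z ∈ convexHull ℝ (Set.range x), 1 ≤ ‖z‖ := by
    intro z hz
    rw [convexHull_eq] at hz
    obtain ⟨ι, tt, wgt, zf, hw0, hw1, hzs, hcm⟩ := hz
    have hch : ∀ i ∈ tt, ∃ m : ℕ, x m = zf i := fun i hi => hzs i hi
    choose! idx hidx using hch
    set NN := tt.sup idx with hNN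
    set II : Finset TreeNode := (wseq NN).inits.toFinset with hII
    have hIIchain : IsFinChain II := isFinChain_inits (wseq NN)
    have hmassge : ∀ i ∈ tt, (1 : ℝ) ≤ ∑ u ∈ II, coord u (zf i) := by
      intro i hi
      rw [← hidx i hi]
      have he1 : ∑ u ∈ II, coord u (x (idx i)) = ∑ u ∈ II, cseq (idx i) u :=
        Finset.sum_congr rfl fun u _ => by rw [hx]; rw [coordJ e coord hcoord]
      rw [he1]
      have hsub : (wseq (idx i)).inits.toFinset ⊆ II := by
        intro u hu
        rw [List.mem_toFinset, List.mem_inits] at hu ⊢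
        exact hu.trans (hmono _ _ (Finset.le_sup hi))
      calc (1 : ℝ) = ∑ u ∈ (wseq (idx i)).inits.toFinset, cseq (idx i) u :=
            (hmassseq (idx i)).symm
        _ ≤ ∑ u ∈ II, cseq (idx i) u :=
            Finset.sum_le_sum_of_subset_of_nonneg hsub (fun u _ _ => hpos _ u)
    have hzeq : z = ∑ i ∈ tt, wgt i • zf i := by
      rw [← hcm, Finset.centerMass_eq_of_sum_1 _ _ hw1]
    have hswap : ∑ u ∈ II, coord u z = ∑ i ∈ tt, wgt i * (∑ u ∈ II, coord u (zf i)) := by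
      calc ∑ u ∈ II, coord u z = ∑ u ∈ II, ∑ i ∈ tt, wgt i * coord u (zf i) := by
            refine Finset.sum_congr rfl fun u _ => ?_
            rw [hzeq, map_sum]
            exact Finset.sum_congr rfl fun i _ => by rw [map_smul, smul_eq_mul]
        _ = ∑ i ∈ tt, ∑ u ∈ II, wgt i * coord u (zf i) := Finset.sum_comm
        _ = ∑ i ∈ tt, wgt i * (∑ u ∈ II, coord u (zf i)) :=
            Finset.sum_congr rfl fun i _ => (Finset.mul_sum _ _ _).symm
    have h1 : (1 : ℝ) ≤ ∑ u ∈ II, coord u z := by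
      rw [hswap]
      calc (1 : ℝ) = ∑ i ∈ tt, wgt i := hw1.symm
        _ ≤ ∑ i ∈ tt, wgt i * (∑ u ∈ II, coord u (zf i)) := by
            refine Finset.sum_le_sum fun i hi => ?_
            exact le_mul_of_one_le_right (hw0 i hi) (hmassge i hi)
    calc (1 : ℝ) ≤ ∑ u ∈ II, coord u z := h1
      _ ≤ ∑ u ∈ II, |coord u z| := Finset.sum_le_sum fun u _ => le_abs_self _
      _ ≤ ‖z‖ := sum_abs_coord_le hnorm' hdense' hcoord hIIchain z
  have hcl : closure (convexHull ℝ (Set.range x)) ⊆ {z : X | 1 ≤ ‖z‖} :=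
    closure_minimal hbig (isClosed_le continuous_const continuous_norm)
  have h0not : (0 : X) ∉ closure (convexHull ℝ (Set.range x)) := by
    intro h
    have := hcl h
    simp at this
    linarith
  exact ⟨x, hxmem, h0not, fun hsub => h0not (hsub h0B)⟩
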